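/- arXiv:2111.14279 — 5 statements merged into one kernel-verified Lean document; each statement's English description precedes it below -/
import Mathlib

section
/- For ε ∈ (0,1), let p_Z ∈ (0,1) satisfy λ = log(1−ε p_Z)/log(1−p_Z) with λ < ε. Then p_Z ≥ (ε−λ)/(ε(1−λ)), i.e., the point p_Z lies in the convex region of φ_Z^λ(p) = h(εp) − λh(p). -/
/-- If `p_Z ∈ (0,1)` satisfies `λ = log(1−εp_Z)/log(1−p_Z)` with `λ < ε`, then
`p_Z ≥ (ε−λ)/(ε(1−λ))`. -/
theorem stmt10 (ε pZ lam : ℝ) (hε : ε ∈ Set.Ioo (0 : ℝ) 1) (hp : pZ ∈ Set.Ioo (0 : ℝ) 1)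
    (hlam : lam = Real.log (1 - ε * pZ) / Real.log (1 - pZ)) (hle : lam < ε) :
    (ε - lam) / (ε * (1 - lam)) ≤ pZ := by
  obtain ⟨hε0, hε1⟩ := hε
  obtain ⟨hp0, hp1⟩ := hp
  have h1 : (0:ℝ) < 1 - pZ := by linarith
  have hlog : Real.log (1 - pZ) < 0 := Real.log_neg h1 (by linarith)
  have h2 : (0:ℝ) < 1 - ε * pZ := by nlinarith
  -- key convexity inequality: (1-εpZ) log(1-εpZ) ≤ ε (1-pZ) log(1-pZ)
  have ha : (0:ℝ) ≤ 1 - ε := by linarith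
  have hab : (1 - ε) + ε = 1 := by ring
  have hconv := Real.convexOn_mul_log.2 (Set.mem_Ici.2 (zero_le_one)) (Set.mem_Ici.2 h1.le)
    ha hε0.le hab
  have hkey : (1 - ε * pZ) * Real.log (1 - ε * pZ) ≤ ε * ((1 - pZ) * Real.log (1 - pZ)) := by
    have e : (1 - ε) • (1:ℝ) + ε • (1 - pZ) = 1 - ε * pZ := by simp [smul_eq_mul]; ring
    rw [e] at hconv
    simpa [Real.log_one] using hconv
  -- lam * log(1-pZ) = log(1-εpZ)
  have hl : lam * Real.log (1 - pZ) = Real.log (1 - ε * pZ) := by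
    rw [hlam, div_mul_cancel₀ _ hlog.ne]
  have hmain : ε * (1 - pZ) ≤ lam * (1 - ε * pZ) := by
    rw [← hl] at hkey
    nlinarith [hkey, hlog]
  have hεl : 0 < ε * (1 - lam) := by nlinarith
  rw [div_le_iff₀ hεl]
  nlinarith
end

section
/- For δ ∈ (0,1/2) and λ ∈ [0,1], the sign of the second derivative of φ_BS^λ(p) = h(δ + (1−2δ)p) − λ h(p) on (0,1) equals the sign of the quadratic (1−λ)(1−2δ)² p² − (1−λ)(1−2δ)² p + λδ(1−δ). In particular, for λ ≥ (1−2δ)², φ_BS^λ is convex on [0,1]. -/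
/-- Binary entropy function. -/
noncomputable def binH (p : ℝ) : ℝ := -p * Real.log p - (1 - p) * Real.log (1 - p)

/-!
`binH` is Mathlib's `Real.binEntropy`, whose second derivative is `-1 / (x * (1 - x))`.
By the chain rule, with `c = 1 - 2δ` and `a = δ + c p`,
`φ''(p) = λ / (p (1 - p)) - c² / (a (1 - a))`, and since `a (1 - a) = δ (1 - δ) + c² p (1 - p)`
the numerator over the positive common denominator is the quadratic
`λ δ (1 - δ) - (1 - λ) c² p (1 - p)`. For convexity, `c² = 1 - 4 δ (1 - δ)` rewrites this as
`(1 - 2p)² λ δ (1 - δ) + p (1 - p) (λ - c²)`, nonnegative on `[0, 1]` once `λ ≥ c²`.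
-/

open Real Set

lemma binH_eq_binEntropy : binH = binEntropy := by
  funext p
  simp only [binH, binEntropy, log_inv]
  ring

lemma Real.sign_div_of_pos {x d : ℝ} (hd : 0 < d) : Real.sign (x / d) = Real.sign x := by
  rcases lt_trichotomy x 0 with h | rfl | h
  · rw [Real.sign_of_neg h, Real.sign_of_neg (div_neg_of_neg_of_pos h hd)]
  · simp
  · rw [Real.sign_of_pos h, Real.sign_of_pos (div_pos h hd)]

lemma mul_one_sub_pos_of_mem_Ioo {x : ℝ} (hx : x ∈ Ioo 0 1) : 0 < x * (1 - x) :=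
  mul_pos hx.1 (sub_pos.2 hx.2)

lemma Real.contDiffAt_binEntropy {n : WithTop ℕ∞} {p : ℝ} (hp₀ : p ≠ 0) (hp₁ : p ≠ 1) :
    ContDiffAt ℝ n binEntropy p := by
  have h₁ : 1 - p ≠ 0 := sub_ne_zero.2 hp₁.symm
  unfold binEntropy
  fun_prop (disch := simp [hp₀, h₁])

lemma deriv_deriv_comp_const_add_mul (f : ℝ → ℝ) (a c x : ℝ) :
    deriv (deriv fun q => f (a + c * q)) x = c ^ 2 * deriv (deriv f) (a + c * x) := by
  have key : ∀ g : ℝ → ℝ,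
      deriv (fun q => g (a + c * q)) = fun q => c * deriv g (a + c * q) := by
    intro g
    funext q
    rw [deriv_comp_mul_left (f := fun y => g (a + y)), deriv_comp_const_add, smul_eq_mul]
  rw [key, deriv_const_mul_field', key]
  ring

lemma deriv_deriv_sub_const_mul {f g : ℝ → ℝ} {x : ℝ} (hf : ContDiffAt ℝ 2 f x)
    (hg : ContDiffAt ℝ 2 g x) (lam : ℝ) :
    deriv (deriv fun q => f q - lam * g q) x = deriv (deriv f) x - lam * deriv (deriv g) x := by
  have h := iteratedDeriv_fun_sub hf (contDiffAt_const (c := lam).mul hg)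
  rwa [iteratedDeriv_const_mul_field, iteratedDeriv_eq_iterate, iteratedDeriv_eq_iterate,
    iteratedDeriv_eq_iterate] at h

lemma deriv_deriv_binEntropy_comp_sub_const_mul {a c p : ℝ} (lam : ℝ) (hx₀ : a + c * p ≠ 0)
    (hx₁ : a + c * p ≠ 1) (hp₀ : p ≠ 0) (hp₁ : p ≠ 1) :
    deriv (deriv fun q => binEntropy (a + c * q) - lam * binEntropy q) p =
      lam / (p * (1 - p)) - c ^ 2 / ((a + c * p) * (1 - (a + c * p))) := by
  have hcomp : ContDiffAt ℝ 2 (fun q => binEntropy (a + c * q)) p :=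
    (contDiffAt_binEntropy hx₀ hx₁).comp (f := fun q => _ + _ * q) p (by fun_prop)
  rw [deriv_deriv_sub_const_mul hcomp (contDiffAt_binEntropy hp₀ hp₁),
    deriv_deriv_comp_const_add_mul]
  have h₂ : ∀ x, deriv (deriv binEntropy) x = -1 / (x * (1 - x)) := fun x => deriv2_binEntropy
  rw [h₂, h₂]
  ring

noncomputable def phiBS (δ lam : ℝ) : ℝ → ℝ :=
  fun q => binEntropy (δ + (1 - 2 * δ) * q) - lam * binEntropy q

lemma add_one_sub_two_mul_mul_mem_Ioo {δ p : ℝ} (hδ : δ ∈ Ioo 0 1) (hp : p ∈ Ioo 0 1) :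
    δ + (1 - 2 * δ) * p ∈ Ioo 0 1 := by
  obtain ⟨hδ₀, hδ₁⟩ := hδ
  obtain ⟨hp₀, hp₁⟩ := hp
  constructor <;> nlinarith [mul_pos hδ₀ hp₀, mul_pos (sub_pos.2 hδ₁) (sub_pos.2 hp₁)]

section phiBS

variable {δ lam p : ℝ}

lemma contDiffAt_phiBS {n : WithTop ℕ∞} (hδ : δ ∈ Ioo 0 1) (hp : p ∈ Ioo 0 1) :
    ContDiffAt ℝ n (phiBS δ lam) p := by
  obtain ⟨hx₀, hx₁⟩ := add_one_sub_two_mul_mul_mem_Ioo hδ hp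
  have hcomp : ContDiffAt ℝ n (fun q => binEntropy (δ + (1 - 2 * δ) * q)) p :=
    (contDiffAt_binEntropy hx₀.ne' hx₁.ne).comp (f := fun q => _ + _ * q) p (by fun_prop)
  exact hcomp.sub (contDiffAt_const.mul (contDiffAt_binEntropy hp.1.ne' hp.2.ne))

lemma deriv_deriv_phiBS (hδ : δ ∈ Ioo 0 1) (hp : p ∈ Ioo 0 1) :
    deriv (deriv (phiBS δ lam)) p =
      ((1 - lam) * (1 - 2 * δ) ^ 2 * p ^ 2 - (1 - lam) * (1 - 2 * δ) ^ 2 * p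
          + lam * δ * (1 - δ)) /
        (p * (1 - p) * ((δ + (1 - 2 * δ) * p) * (1 - (δ + (1 - 2 * δ) * p)))) := by
  have hx := add_one_sub_two_mul_mul_mem_Ioo hδ hp
  unfold phiBS
  rw [deriv_deriv_binEntropy_comp_sub_const_mul lam hx.1.ne' hx.2.ne hp.1.ne' hp.2.ne,
    div_sub_div _ _ (mul_one_sub_pos_of_mem_Ioo hp).ne' (mul_one_sub_pos_of_mem_Ioo hx).ne']
  ring

lemma sign_deriv_deriv_phiBS (hδ : δ ∈ Ioo 0 1) (hp : p ∈ Ioo 0 1) :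
    Real.sign (deriv (deriv (phiBS δ lam)) p) =
      Real.sign ((1 - lam) * (1 - 2 * δ) ^ 2 * p ^ 2 - (1 - lam) * (1 - 2 * δ) ^ 2 * p
        + lam * δ * (1 - δ)) := by
  rw [deriv_deriv_phiBS hδ hp, sign_div_of_pos]
  exact mul_pos (mul_one_sub_pos_of_mem_Ioo hp)
    (mul_one_sub_pos_of_mem_Ioo (add_one_sub_two_mul_mul_mem_Ioo hδ hp))

lemma phiBS_quadratic_nonneg (hδ : δ ∈ Icc 0 1) (hlam : (1 - 2 * δ) ^ 2 ≤ lam)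
    (hp : p ∈ Icc 0 1) :
    0 ≤ (1 - lam) * (1 - 2 * δ) ^ 2 * p ^ 2 - (1 - lam) * (1 - 2 * δ) ^ 2 * p
      + lam * δ * (1 - δ) := by
  obtain ⟨hδ₀, hδ₁⟩ := hδ
  have hlam₀ : 0 ≤ lam := (sq_nonneg _).trans hlam
  have hp' : 0 ≤ p * (1 - p) := mul_nonneg hp.1 (sub_nonneg.2 hp.2)
  have hδ' : 0 ≤ lam * (δ * (1 - δ)) :=
    mul_nonneg hlam₀ (mul_nonneg hδ₀ (sub_nonneg.2 hδ₁))
  nlinarith [mul_nonneg (sq_nonneg (1 - 2 * p)) hδ', mul_nonneg hp' (sub_nonneg.2 hlam)]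

lemma convexOn_phiBS (hδ : δ ∈ Ioo 0 1) (hlam : (1 - 2 * δ) ^ 2 ≤ lam) :
    ConvexOn ℝ (Icc 0 1) (phiBS δ lam) := by
  have hsmooth : ContDiffOn ℝ (1 + 1) (phiBS δ lam) (Ioo 0 1) :=
    fun p hp => (contDiffAt_phiBS hδ hp).contDiffWithinAt
  obtain ⟨hdiff, -, hderiv⟩ := (contDiffOn_succ_iff_deriv_of_isOpen isOpen_Ioo).1 hsmooth
  have hcont : Continuous (phiBS δ lam) := by unfold phiBS; fun_prop
  refine convexOn_of_deriv2_nonneg (convex_Icc 0 1) hcont.continuousOn ?_ ?_ ?_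
    <;> rw [interior_Icc]
  · exact hdiff
  · exact hderiv.differentiableOn one_ne_zero
  · intro p hp
    rw [Function.iterate_succ_apply, Function.iterate_one, deriv_deriv_phiBS hδ hp]
    exact div_nonneg (phiBS_quadratic_nonneg ⟨hδ.1.le, hδ.2.le⟩ hlam ⟨hp.1.le, hp.2.le⟩)
      (mul_pos (mul_one_sub_pos_of_mem_Ioo hp)
        (mul_one_sub_pos_of_mem_Ioo (add_one_sub_two_mul_mul_mem_Ioo hδ hp))).le

end phiBS

theorem stmt12_general (δ lam : ℝ) (hδ : δ ∈ Set.Ioo (0 : ℝ) (1 / 2)) :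
    (∀ p ∈ Set.Ioo (0 : ℝ) 1,
      Real.sign (deriv (deriv (fun q => binH (δ + (1 - 2 * δ) * q) - lam * binH q)) p)
        = Real.sign ((1 - lam) * (1 - 2 * δ) ^ 2 * p ^ 2
            - (1 - lam) * (1 - 2 * δ) ^ 2 * p + lam * δ * (1 - δ))) ∧
    ((1 - 2 * δ) ^ 2 ≤ lam →
      ConvexOn ℝ (Set.Icc (0 : ℝ) 1) (fun q => binH (δ + (1 - 2 * δ) * q) - lam * binH q)) := by
  have hδ' : δ ∈ Ioo 0 1 := ⟨hδ.1, hδ.2.trans (by norm_num)⟩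
  rw [binH_eq_binEntropy]
  exact ⟨fun p hp => sign_deriv_deriv_phiBS hδ' hp, convexOn_phiBS hδ'⟩

/-- For `φ_BS^λ(p) = h(δ+(1−2δ)p) − λ h(p)`, `δ ∈ (0,1/2)`, `λ ∈ [0,1]`: on `(0,1)` the
sign of the second derivative equals the sign of
`(1−λ)(1−2δ)²p² − (1−λ)(1−2δ)²p + λδ(1−δ)`; for `λ ≥ (1−2δ)²` the function is convex
on `[0,1]`. -/
theorem stmt12 (δ lam : ℝ) (hδ : δ ∈ Set.Ioo (0 : ℝ) (1 / 2)) (hlam : lam ∈ Set.Icc (0 : ℝ) 1) :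
    (∀ p ∈ Set.Ioo (0 : ℝ) 1,
      Real.sign (deriv (deriv (fun q => binH (δ + (1 - 2 * δ) * q) - lam * binH q)) p)
        = Real.sign ((1 - lam) * (1 - 2 * δ) ^ 2 * p ^ 2
            - (1 - lam) * (1 - 2 * δ) ^ 2 * p + lam * δ * (1 - δ))) ∧
    ((1 - 2 * δ) ^ 2 ≤ lam →
      ConvexOn ℝ (Set.Icc (0 : ℝ) 1) (fun q => binH (δ + (1 - 2 * δ) * q) - lam * binH q)) :=
  stmt12_general δ lam hδ
end

section
/- Let f: [0,1] → ℝ be continuous, concave on [0, p*] and convex on [p*, 1] for some p* ∈ (0,1), with f(0) = 0. Suppose p₀ ∈ [p*, 1] satisfies f(p₀) = p₀ f′(p₀). Then the line L(p) = p f′(p₀) satisfies f(p) ≥ L(p) for all p ∈ [0,1], and consequently the lower convex envelope of f equals L on [0, p₀] and equals f on [p₀, 1]. -/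
/-- Lower convex envelope of `f` on `[0,1]`: pointwise supremum of affine functions
below `f` on `[0,1]`. -/
noncomputable def convexEnvelope (f : ℝ → ℝ) (p : ℝ) : ℝ :=
  sSup {y : ℝ | ∃ a b : ℝ, (∀ q ∈ Set.Icc (0 : ℝ) 1, a * q + b ≤ f q) ∧ y = a * p + b}

/-- Structure of the convex envelope of a concave-then-convex function `f` with `f 0 = 0`:
if `f p₀ = p₀ f'(p₀)` for `p₀` in the convex region, then the line `p ↦ p·f'(p₀)` lies
below `f` on `[0,1]`, and the convex envelope equals this line on `[0,p₀]` and equals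
`f` on `[p₀,1]`. -/
theorem stmt13 (f : ℝ → ℝ) (pstar p₀ f' : ℝ)
    (hps : pstar ∈ Set.Ioo (0 : ℝ) 1)
    (hcont : ContinuousOn f (Set.Icc 0 1))
    (hconc : ConcaveOn ℝ (Set.Icc 0 pstar) f)
    (hconv : ConvexOn ℝ (Set.Icc pstar 1) f)
    (hf0 : f 0 = 0)
    (hp0 : p₀ ∈ Set.Icc pstar 1)
    (hderiv : HasDerivWithinAt f f' (Set.Icc 0 1) p₀)
    (htan : f p₀ = p₀ * f') :
    (∀ p ∈ Set.Icc (0 : ℝ) 1, p * f' ≤ f p) ∧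
    (∀ p ∈ Set.Icc (0 : ℝ) p₀, convexEnvelope f p = p * f') ∧
    (∀ p ∈ Set.Icc p₀ 1, convexEnvelope f p = f p) := by
  obtain ⟨hps0, hps1⟩ := hps
  obtain ⟨hp0l, hp0r⟩ := hp0
  have hp0pos : 0 < p₀ := lt_of_lt_of_le hps0 hp0l
  have hp0mem : p₀ ∈ Set.Icc (0:ℝ) 1 := ⟨hp0pos.le, hp0r⟩
  have hderiv' : Filter.Tendsto (slope f p₀) (nhdsWithin p₀ (Set.Icc (0:ℝ) 1 \ {p₀})) (nhds f') :=
    hasDerivWithinAt_iff_tendsto_slope.1 hderiv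
  -- slope bound on the right of p₀
  have hslope_right : ∀ y, p₀ < y → y ≤ 1 → f' ≤ (f y - f p₀) / (y - p₀) := by
    intro y hy1 hy2
    have hsub : Set.Ioo p₀ y ⊆ Set.Icc (0:ℝ) 1 \ {p₀} := by
      intro x hx
      exact ⟨⟨le_of_lt (lt_trans hp0pos hx.1), le_trans hx.2.le hy2⟩, ne_of_gt hx.1⟩
    have hne : (nhdsWithin p₀ (Set.Ioo p₀ y)).NeBot := left_nhdsWithin_Ioo_neBot hy1
    have htend : Filter.Tendsto (slope f p₀) (nhdsWithin p₀ (Set.Ioo p₀ y)) (nhds f') :=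
      hderiv'.mono_left (nhdsWithin_mono p₀ hsub)
    refine le_of_tendsto htend ?_
    filter_upwards [self_mem_nhdsWithin] with x hx
    rw [slope_def_field]
    exact hconv.secant_mono (a := p₀) (x := x) (y := y)
      ⟨hp0l, hp0r⟩ ⟨le_of_lt (lt_of_le_of_lt hp0l hx.1), le_trans hx.2.le hy2⟩
      ⟨le_trans hp0l (le_of_lt hy1), hy2⟩ (ne_of_gt hx.1) (ne_of_gt hy1) hx.2.le
  -- slope bound on the left of p₀
  have hslope_left : ∀ y, pstar ≤ y → y < p₀ → (f y - f p₀) / (y - p₀) ≤ f' := by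
    intro y hy1 hy2
    have hsub : Set.Ioo y p₀ ⊆ Set.Icc (0:ℝ) 1 \ {p₀} := by
      intro x hx
      exact ⟨⟨le_of_lt (lt_of_lt_of_le (lt_of_lt_of_le hps0 hy1) hx.1.le), le_trans hx.2.le hp0r⟩,
        ne_of_lt hx.2⟩
    have hne : (nhdsWithin p₀ (Set.Ioo y p₀)).NeBot := right_nhdsWithin_Ioo_neBot hy2
    have htend : Filter.Tendsto (slope f p₀) (nhdsWithin p₀ (Set.Ioo y p₀)) (nhds f') :=
      hderiv'.mono_left (nhdsWithin_mono p₀ hsub)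
    refine ge_of_tendsto htend ?_
    filter_upwards [self_mem_nhdsWithin] with x hx
    rw [slope_def_field]
    exact hconv.secant_mono (a := p₀) (x := y) (y := x)
      ⟨hp0l, hp0r⟩ ⟨hy1, le_trans (le_of_lt hy2) hp0r⟩
      ⟨le_trans hy1 hx.1.le, le_trans hx.2.le hp0r⟩ (ne_of_lt hy2) (ne_of_lt hx.2) hx.1.le
  -- Part A on [pstar, 1]
  have hA1 : ∀ p ∈ Set.Icc pstar 1, p * f' ≤ f p := by
    intro p hp
    rcases lt_trichotomy p p₀ with h | h | h
    · have := hslope_left p hp.1 h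
      rw [div_le_iff_of_neg (by linarith)] at this
      linarith
    · rw [h, htan]
    · have := hslope_right p h hp.2
      rw [le_div_iff₀ (by linarith)] at this
      linarith
  -- Part A on [0, 1]
  have hA : ∀ p ∈ Set.Icc (0:ℝ) 1, p * f' ≤ f p := by
    intro p hp
    rcases le_or_gt pstar p with h | h
    · exact hA1 p ⟨h, hp.2⟩
    · have hfps : pstar * f' ≤ f pstar := hA1 pstar ⟨le_refl _, hps1.le⟩
      have hx : pstar ∈ Set.Icc (0:ℝ) pstar := ⟨hps0.le, le_refl _⟩
      have hy : (0:ℝ) ∈ Set.Icc (0:ℝ) pstar := ⟨le_refl _, hps0.le⟩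
      have ht0 : 0 ≤ p / pstar := div_nonneg hp.1 hps0.le
      have ht1 : 0 ≤ 1 - p / pstar := by
        have : p / pstar ≤ 1 := by rw [div_le_one hps0]; exact h.le
        linarith
      have := hconc.2 hx hy ht0 ht1 (by ring)
      simp only [smul_eq_mul, hf0, mul_zero, add_zero] at this
      have hps' : p / pstar * pstar = p := div_mul_cancel₀ p (ne_of_gt hps0)
      rw [hps'] at this
      -- this : p / pstar * f pstar ≤ f p
      have h2 : p * f' ≤ p / pstar * f pstar := by
        have := mul_le_mul_of_nonneg_left hfps ht0
        calc p * f' = p / pstar * (pstar * f') := by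
              field_simp
            _ ≤ p / pstar * f pstar := this
      linarith
  -- the line p ↦ p * f' is in the defining set
  have hmemline : ∀ p : ℝ, p * f' ∈
      {y : ℝ | ∃ a b : ℝ, (∀ q ∈ Set.Icc (0 : ℝ) 1, a * q + b ≤ f q) ∧ y = a * p + b} := by
    intro p
    refine ⟨f', 0, fun q hq => ?_, by ring⟩
    have := hA q hq
    linarith [hA q hq, mul_comm q f']
  have hub : ∀ p ∈ Set.Icc (0:ℝ) 1, ∀ y ∈
      {y : ℝ | ∃ a b : ℝ, (∀ q ∈ Set.Icc (0 : ℝ) 1, a * q + b ≤ f q) ∧ y = a * p + b},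
      y ≤ f p := by
    rintro p hp y ⟨a, b, hline, rfl⟩
    exact hline p hp
  have hbdd : ∀ p ∈ Set.Icc (0:ℝ) 1, BddAbove
      {y : ℝ | ∃ a b : ℝ, (∀ q ∈ Set.Icc (0 : ℝ) 1, a * q + b ≤ f q) ∧ y = a * p + b} :=
    fun p hp => ⟨f p, fun y hy => hub p hp y hy⟩
  refine ⟨hA, ?_, ?_⟩
  · -- envelope = line on [0, p₀]
    intro p hp
    have hpmem : p ∈ Set.Icc (0:ℝ) 1 := ⟨hp.1, le_trans hp.2 hp0r⟩
    refine le_antisymm (csSup_le ⟨p * f', hmemline p⟩ ?_) (le_csSup (hbdd p hpmem) (hmemline p))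
    rintro y ⟨a, b, hline, rfl⟩
    have hb : b ≤ 0 := by
      have := hline 0 ⟨le_refl _, zero_le_one⟩
      rw [hf0] at this; linarith
    have h0 : a * p₀ + b ≤ p₀ * f' := htan ▸ hline p₀ hp0mem
    have h1 : p * (a * p₀ + b) ≤ p * (p₀ * f') := mul_le_mul_of_nonneg_left h0 hp.1
    have h2 : (p₀ - p) * b ≤ 0 := mul_nonpos_of_nonneg_of_nonpos (by linarith [hp.2]) hb
    have hid : p₀ * (a * p + b) = p * (a * p₀ + b) + (p₀ - p) * b := by ring
    have hid2 : p * (p₀ * f') = p₀ * (p * f') := by ring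
    have h3 : p₀ * (a * p + b) ≤ p₀ * (p * f') := by linarith
    exact le_of_mul_le_mul_left h3 hp0pos
  · -- envelope = f on [p₀, 1]
    intro p hp
    have hpmem : p ∈ Set.Icc (0:ℝ) 1 := ⟨le_trans hp0pos.le hp.1, hp.2⟩
    refine le_antisymm (csSup_le ⟨p * f', hmemline p⟩ (hub p hpmem)) ?_
    rcases eq_or_lt_of_le hp.1 with h | hlt
    · rw [← h, htan]
      exact le_csSup (hbdd p₀ hp0mem) (hmemline p₀)
    · -- p₀ < p : approximate supporting lines
      by_contra hcon
      push_neg at hcon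
      set ε := f p - sSup {y : ℝ | ∃ a b : ℝ,
        (∀ q ∈ Set.Icc (0 : ℝ) 1, a * q + b ≤ f q) ∧ y = a * p + b} with hε
      have hεpos : 0 < ε := by simp only [hε, convexEnvelope] at hcon ⊢; linarith
      -- find v ∈ (p₀, p) with f v + f' * (p - v) > f p - ε
      have hsub : Set.Ioo p₀ p ⊆ Set.Icc (0:ℝ) 1 := fun x hx =>
        ⟨le_of_lt (lt_trans hp0pos hx.1), le_trans hx.2.le hp.2⟩
      have h1 : Filter.Tendsto f (nhdsWithin p (Set.Ioo p₀ p)) (nhds (f p)) :=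
        Filter.Tendsto.mono_left (hcont p hpmem) (nhdsWithin_mono p hsub)
      have h2 : Filter.Tendsto (fun v => f v + f' * (p - v)) (nhdsWithin p (Set.Ioo p₀ p))
          (nhds (f p)) := by
        have h3 : Filter.Tendsto (fun v : ℝ => f' * (p - v)) (nhdsWithin p (Set.Ioo p₀ p))
            (nhds 0) := by
          have : Filter.Tendsto (fun v : ℝ => f' * (p - v)) (nhds p) (nhds (f' * (p - p))) :=
            tendsto_const_nhds.mul (tendsto_const_nhds.sub Filter.tendsto_id)
          simpa using this.mono_left nhdsWithin_le_nhds
        simpa using h1.add h3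
      have hne : (nhdsWithin p (Set.Ioo p₀ p)).NeBot := right_nhdsWithin_Ioo_neBot hlt
      have hev : ∀ᶠ v in nhdsWithin p (Set.Ioo p₀ p),
          f p - ε < f v + f' * (p - v) := h2.eventually (eventually_gt_nhds (by linarith))
      obtain ⟨v, hv1, hv2⟩ := (hev.and self_mem_nhdsWithin).exists
      obtain ⟨hvl, hvr⟩ := hv2
      have hvlt1 : v < 1 := lt_of_lt_of_le hvr hp.2
      have hvmem : v ∈ Set.Icc pstar 1 := ⟨le_of_lt (lt_of_le_of_lt hp0l hvl), hvlt1.le⟩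
      -- supporting line at v
      set A := (fun q => (f q - f v) / (q - v)) '' (Set.Ico pstar v) with hA'
      have hAne : A.Nonempty := ⟨_, ⟨pstar, ⟨le_refl _, lt_of_le_of_lt hp0l hvl⟩, rfl⟩⟩
      have hAbdd : BddAbove A := by
        refine ⟨(f 1 - f v) / (1 - v), ?_⟩
        rintro z ⟨q, hq, rfl⟩
        exact hconv.secant_mono (a := v) hvmem ⟨hq.1, le_trans hq.2.le hvlt1.le⟩
          ⟨hps1.le, le_refl _⟩ (ne_of_lt hq.2) (ne_of_gt hvlt1) (le_trans hq.2.le hvlt1.le)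
      set a := sSup A with ha'
      set b := f v - a * v with hb'
      have hsupp : ∀ q ∈ Set.Icc pstar 1, a * q + b ≤ f q := by
        intro q hq
        rcases lt_trichotomy q v with h | h | h
        · have hle : (f q - f v) / (q - v) ≤ a := le_csSup hAbdd ⟨q, ⟨hq.1, h⟩, rfl⟩
          rw [div_le_iff_of_neg (by linarith)] at hle
          simp only [hb']; linarith
        · simp only [hb', h]; linarith
        · have hle : a ≤ (f q - f v) / (q - v) := by
            refine csSup_le hAne ?_
            rintro z ⟨r, hr, rfl⟩
            exact hconv.secant_mono (a := v) hvmem ⟨hr.1, le_trans hr.2.le hvlt1.le⟩ hq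
              (ne_of_lt hr.2) (ne_of_gt h) (le_trans hr.2.le (le_of_lt h))
          rw [le_div_iff₀ (by linarith)] at hle
          simp only [hb']; linarith
      have haf' : f' ≤ a := by
        have hmemA : (f p₀ - f v) / (p₀ - v) ∈ A := ⟨p₀, ⟨hp0l, hvl⟩, rfl⟩
        have h1 : (f p₀ - f v) / (p₀ - v) = (f v - f p₀) / (v - p₀) := by
          rw [← neg_div_neg_eq]; ring_nf
        have hfv : v * f' ≤ f v := hA v ⟨le_of_lt (lt_trans hp0pos hvl), hvlt1.le⟩
        have h2 : f' ≤ (f v - f p₀) / (v - p₀) := by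
          rw [le_div_iff₀ (by linarith)]
          rw [htan]; nlinarith
        calc f' ≤ (f v - f p₀) / (v - p₀) := h2
          _ = (f p₀ - f v) / (p₀ - v) := h1.symm
          _ ≤ a := le_csSup hAbdd hmemA
      -- the line is below f on all of [0,1]
      have hline01 : ∀ q ∈ Set.Icc (0:ℝ) 1, a * q + b ≤ f q := by
        intro q hq
        rcases le_or_gt pstar q with h | h
        · exact hsupp q ⟨h, hq.2⟩
        · have ep0 : a * p₀ + b ≤ p₀ * f' := htan ▸ hsupp p₀ ⟨hp0l, hp0r⟩
          have e0 : b ≤ 0 := by nlinarith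
          have hqp0 : q ≤ p₀ := le_trans h.le hp0l
          have h1 : q * (a * p₀ + b) ≤ q * (p₀ * f') := mul_le_mul_of_nonneg_left ep0 hq.1
          have h2 : (p₀ - q) * b ≤ 0 := mul_nonpos_of_nonneg_of_nonpos (by linarith) e0
          have h3 : p₀ * (a * q + b) ≤ p₀ * (q * f') := by nlinarith
          have h4 : a * q + b ≤ q * f' := le_of_mul_le_mul_left h3 hp0pos
          exact le_trans h4 (hA q hq)
      -- value at p exceeds f p - ε : contradiction
      have hyS : a * p + b ∈ {y : ℝ | ∃ a b : ℝ,
          (∀ q ∈ Set.Icc (0 : ℝ) 1, a * q + b ≤ f q) ∧ y = a * p + b} := ⟨a, b, hline01, rfl⟩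
      have hval : f p - ε < a * p + b := by
        have h5 : f' * (p - v) ≤ a * (p - v) := mul_le_mul_of_nonneg_right haf' (by linarith)
        have h6 : a * p + b = f v + a * (p - v) := by simp only [hb']; ring
        linarith
      have := le_csSup (hbdd p hpmem) hyS
      simp only [hε] at hεpos ⊢
      linarith
end

section
/- Let 𝒲₁, …, 𝒲_q be nonempty sets (argmax sets of q objective functions over a common domain) with the order-preservation property: whenever P ∈ 𝒲_j and P′ ∈ 𝒲_k, the induced order of the q objective values at P agrees with the order at P′, and all q objectives attain the same optimal value ξ. If ⋂_{η=1}^{q−1} 𝒲_η ≠ ∅ and P ∈ ⋂_{η<q} 𝒲_η with P ∉ 𝒲_q, then for any P′ ∈ 𝒲_q one has P′ ∈ ⋂_{η<q} 𝒲_η. Consequently, under the order-preservation hypothesis, ⋂_{η=1}^q 𝒲_η ≠ ∅. -/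
/-- Order-preservation lemma for argmax sets (Proposition 1 machinery): let
`W j = {P ∈ D₀ | g j P = ξ}` be the (nonempty) argmax sets of `q+1` objectives, all
attaining the common optimum `ξ` on `D₀`, and suppose the ranking of the objective
values is the same at every point of `⋃ j, W j`. If `P` lies in the first `q` argmax
sets but not in the last one, then every `P' ∈ W (last)` lies in all the first `q`
sets; consequently `⋂ j, W j ≠ ∅`. -/
theorem stmt14 {D : Type*} (q : ℕ) (D₀ : Set D) (g : Fin (q + 1) → D → ℝ) (ξ : ℝ)
    (W : Fin (q + 1) → Set D)
    (hW : ∀ j, W j = {P ∈ D₀ | g j P = ξ})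
    (hmax : ∀ j, ∀ P ∈ D₀, g j P ≤ ξ)
    (hne : ∀ j, (W j).Nonempty)
    (horder : ∀ P ∈ ⋃ j, W j, ∀ P' ∈ ⋃ j, W j, ∀ a b : Fin (q + 1),
      g a P ≤ g b P → g a P' ≤ g b P') :
    (∀ P, (∀ j : Fin q, P ∈ W j.castSucc) → P ∉ W (Fin.last q) →
      ∀ P' ∈ W (Fin.last q), ∀ j : Fin q, P' ∈ W j.castSucc) ∧
    (⋂ j, W j).Nonempty := by
  -- key: any point of `W (last)` lies in every `W j`
  have key : ∀ P' ∈ W (Fin.last q), ∀ j : Fin (q + 1), P' ∈ W j := by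
    intro P' hP' j
    obtain ⟨Q, hQ⟩ := hne j
    have hQmem : Q ∈ D₀ ∧ g j Q = ξ := by rwa [hW j] at hQ
    have hP'mem : P' ∈ D₀ ∧ g (Fin.last q) P' = ξ := by rwa [hW (Fin.last q)] at hP'
    have hQU : Q ∈ ⋃ i, W i := Set.mem_iUnion.2 ⟨j, hQ⟩
    have hP'U : P' ∈ ⋃ i, W i := Set.mem_iUnion.2 ⟨Fin.last q, hP'⟩
    have h1 : g (Fin.last q) Q ≤ g j Q := by
      rw [hQmem.2]; exact hmax _ _ hQmem.1
    have h2 : g (Fin.last q) P' ≤ g j P' := horder Q hQU P' hP'U _ _ h1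
    rw [hW j]
    exact ⟨hP'mem.1, le_antisymm (hmax _ _ hP'mem.1) (hP'mem.2 ▸ h2)⟩
  refine ⟨fun P _ _ P' hP' j => key P' hP' j.castSucc, ?_⟩
  obtain ⟨P', hP'⟩ := hne (Fin.last q)
  exact ⟨P', Set.mem_iInter.2 (key P' hP')⟩
end

section
/- Let P_{XY} be a joint distribution on a finite set X × Y, φ: X^n → M₁ a map, ψ̄: M₁ × M₂ → Y^n a map, and φ₂: Y^n → M₂ arbitrary. For any η > 0, P_{Y^n φ(X^n)}-probability of the event {Ŷ^n = Y^n} restricted to pairs with P_{Y^n|φ(X^n)}(y^n|u₁) ≤ e^{−η}/|M₂| is at most e^{−η}, where Ŷ^n = ψ̄(φ(X^n), φ₂(Y^n)). Consequently Pr{Ŷ^n = Y^n} ≤ P_{Y^n φ(X^n)}(𝒜ᶜ) + e^{−η} where 𝒜 = {(y^n,u₁): P_{Y^n|φ(X^n)}(y^n|u₁) ≤ e^{−η}/|M₂|}. -/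
/-! For a fixed message `u₁ = φ(xⁿ)`, a sequence `yⁿ` with `ψ̄(u₁, φ₂(yⁿ)) = yⁿ` is determined by
`φ₂(yⁿ) ∈ M₂`, so there are at most `|M₂|` of them. Those of conditional probability at most
`e^{-η}/|M₂|` given `u₁` thus carry conditional mass at most `e^{-η}`, and averaging over `u₁`
gives the first bound. The second follows by splitting the event `{Ŷⁿ = Yⁿ}` along `𝒜`. -/

open scoped Classical

open Finset

theorem sum_pi_prod_eq_pow {ι X Y : Type*} [Fintype ι] [DecidableEq ι] [Fintype X] [Fintype Y]
    (p : X → Y → ℝ) :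
    ∑ x : ι → X, ∑ y : ι → Y, ∏ i, p (x i) (y i) = (∑ x, ∑ y, p x y) ^ Fintype.card ι := by
  rw [← card_univ, ← prod_const, Fintype.prod_sum]
  exact sum_congr rfl fun x _ => (Fintype.prod_sum fun i y => p (x i) y).symm

theorem sum_sum_ite_comp_eq_sum_fibers {Ω A B : Type*} [Fintype Ω] [Fintype A] [Fintype B]
    [DecidableEq A] (φ : Ω → A) (D : A → B → Prop) [∀ a y, Decidable (D a y)] (w : Ω → B → ℝ) :
    ∑ x, ∑ y, (if D (φ x) y then w x y else 0) =
      ∑ a, ∑ y, if D a y then ∑ x, (if φ x = a then w x y else 0) else 0 := by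
  have fiber (a : A) (y : B) : (if D a y then ∑ x, (if φ x = a then w x y else 0) else 0) =
      ∑ x, if φ x = a then (if D (φ x) y then w x y else 0) else 0 := by
    by_cases h : D a y <;> simp +contextual [h]
  simp only [fiber]
  conv_rhs => rw [sum_comm]; enter [2, y]; rw [sum_comm]
  rw [sum_comm]
  simp

theorem le_mul_of_div_le_of_le {a b c : ℝ} (ha : 0 ≤ a) (hab : a ≤ b) (h : a / b ≤ c) :
    a ≤ c * b := by
  rcases (ha.trans hab).eq_or_lt with hb | hb
  · rw [← hb, mul_zero]
    exact hb ▸ hab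
  · exact (div_le_iff₀ hb).mp h

section Decoding

variable {A B C : Type*} [Fintype B] [Fintype C] [DecidableEq B]

theorem card_filter_comp_eq_self_le (f : B → C) (g : C → B) :
    #{y | g (f y) = y} ≤ Fintype.card C := by
  refine card_le_card_of_injOn f (fun _ _ => mem_univ _) fun a ha b hb hab => ?_
  rw [← (mem_filter.mp ha).2, ← (mem_filter.mp hb).2, hab]

theorem sum_ite_decodable_unlikely_le (p : B → ℝ) (hp : ∀ y, 0 ≤ p y) (f : B → C)
    (g : C → B) {t : ℝ} (ht : 0 ≤ t) :
    ∑ y, (if g (f y) = y ∧ p y / ∑ y', p y' ≤ t / Fintype.card C then p y else 0) ≤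
      t * ∑ y, p y := by
  set S := ∑ y', p y'
  have hS : 0 ≤ S := sum_nonneg fun y _ => hp y
  have hbound : 0 ≤ t / Fintype.card C * S := by positivity
  calc ∑ y, (if g (f y) = y ∧ p y / S ≤ t / Fintype.card C then p y else 0)
      ≤ ∑ y, if g (f y) = y then t / Fintype.card C * S else 0 := by
        refine sum_le_sum fun y _ => ?_
        split_ifs with h h'
        · exact le_mul_of_div_le_of_le (hp y) (single_le_sum (fun y _ => hp y) (mem_univ y)) h.2
        · exact absurd h.1 h'
        · exact hbound
        · exact le_rfl
    _ = #{y | g (f y) = y} * (t / Fintype.card C * S) := by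
        rw [← sum_filter, sum_const, nsmul_eq_mul]
    _ ≤ Fintype.card C * (t / Fintype.card C * S) := by
        gcongr
        exact_mod_cast card_filter_comp_eq_self_le f g
    _ ≤ t * S := by
        rw [← mul_assoc]
        gcongr
        rcases (Nat.cast_nonneg (Fintype.card C) : (0 : ℝ) ≤ _).eq_or_lt with h | h
        · simp [← h, ht]
        · rw [mul_div_cancel₀ _ h.ne']

theorem sum_sum_ite_decodable_unlikely_le [Fintype A] (P : A → B → ℝ) (hP : ∀ a y, 0 ≤ P a y)
    (f : B → C) (g : A → C → B) {t : ℝ} (ht : 0 ≤ t) :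
    ∑ a, ∑ y, (if g a (f y) = y ∧ P a y / ∑ y', P a y' ≤ t / Fintype.card C then P a y else 0) ≤
      t * ∑ a, ∑ y, P a y := by
  rw [mul_sum]
  exact sum_le_sum fun a _ => sum_ite_decodable_unlikely_le (P a) (hP a) f (g a) ht

end Decoding

theorem sum_sum_ite_le_add {A B : Type*} [Fintype A] [Fintype B] (P : A → B → ℝ)
    (hP : ∀ a y, 0 ≤ P a y) (D E : A → B → Prop) [∀ a y, Decidable (D a y)]
    [∀ a y, Decidable (E a y)] :
    ∑ a, ∑ y, (if D a y then P a y else 0) ≤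
      ∑ a, ∑ y, (if D a y ∧ E a y then P a y else 0) + ∑ a, ∑ y, if ¬E a y then P a y else 0 := by
  simp only [← sum_add_distrib]
  refine sum_le_sum fun a _ => sum_le_sum fun y _ => ?_
  by_cases hD : D a y <;> by_cases hE : E a y <;> simp [hD, hE, hP a y]

theorem stmt15_general {X Y M₁ M₂ : Type*} [Fintype X] [Fintype Y] [Fintype M₁] [Fintype M₂]
    (n : ℕ) (PXY : X → Y → ℝ) (h0 : ∀ x y, 0 ≤ PXY x y) (h1 : ∑ x, ∑ y, PXY x y = 1)
    (φ : (Fin n → X) → M₁) (φ₂ : (Fin n → Y) → M₂) (ψ : M₁ → M₂ → (Fin n → Y))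
    (η : ℝ) :
    (∑ m₁ : M₁, ∑ y : Fin n → Y,
        if ψ m₁ (φ₂ y) = y ∧
            (∑ x : Fin n → X, if φ x = m₁ then ∏ l, PXY (x l) (y l) else 0) /
              (∑ y' : Fin n → Y, ∑ x : Fin n → X, if φ x = m₁ then ∏ l, PXY (x l) (y' l) else 0)
              ≤ Real.exp (-η) / Fintype.card M₂
        then ∑ x : Fin n → X, if φ x = m₁ then ∏ l, PXY (x l) (y l) else 0 else 0)
      ≤ Real.exp (-η) ∧
    (∑ x : Fin n → X, ∑ y : Fin n → Y,
        if ψ (φ x) (φ₂ y) = y then ∏ l, PXY (x l) (y l) else 0)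
      ≤ (∑ m₁ : M₁, ∑ y : Fin n → Y,
          if ¬ ((∑ x : Fin n → X, if φ x = m₁ then ∏ l, PXY (x l) (y l) else 0) /
              (∑ y' : Fin n → Y, ∑ x : Fin n → X, if φ x = m₁ then ∏ l, PXY (x l) (y' l) else 0)
              ≤ Real.exp (-η) / Fintype.card M₂)
          then ∑ x : Fin n → X, if φ x = m₁ then ∏ l, PXY (x l) (y l) else 0 else 0)
        + Real.exp (-η) := by
  -- `P m₁ y` is the joint mass `P_{φ(Xⁿ) Yⁿ}(m₁, y)`
  set P : M₁ → (Fin n → Y) → ℝ :=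
    fun m₁ y => ∑ x, if φ x = m₁ then ∏ l, PXY (x l) (y l) else 0
  have hP : ∀ m₁ y, 0 ≤ P m₁ y := fun m₁ y =>
    sum_nonneg fun x _ => by split_ifs <;> [exact prod_nonneg fun l _ => h0 _ _; exact le_rfl]
  have hP_mass : ∑ m₁, ∑ y, P m₁ y = 1 := by
    have h := sum_sum_ite_comp_eq_sum_fibers φ (fun _ _ => True)
      fun (x : Fin n → X) (y : Fin n → Y) => ∏ l, PXY (x l) (y l)
    simp only [if_true] at h
    rw [← h, sum_pi_prod_eq_pow PXY, h1, one_pow]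
  have hunlikely := sum_sum_ite_decodable_unlikely_le P hP φ₂ ψ (Real.exp_nonneg (-η))
  rw [hP_mass, mul_one] at hunlikely
  refine ⟨hunlikely, ?_⟩
  rw [sum_sum_ite_comp_eq_sum_fibers φ fun m₁ y => ψ m₁ (φ₂ y) = y]
  have hsplit := sum_sum_ite_le_add P hP (fun m₁ y => ψ m₁ (φ₂ y) = y)
    fun m₁ y => P m₁ y / ∑ y', P m₁ y' ≤ Real.exp (-η) / Fintype.card M₂
  linarith

/-- WAK-to-hypothesis-testing conversion bound: for `(X^n,Y^n) ∼ P_{XY}^{⊗n}`,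
compressors `φ : X^n → M₁`, `φ₂ : Y^n → M₂`, decoder `ψ̄ : M₁ × M₂ → Y^n`,
`Ŷ^n = ψ̄(φ(X^n), φ₂(Y^n))`, and any `η > 0`: the probability of `{Ŷ^n = Y^n}` on pairs
with `P_{Y^n|φ(X^n)}(y^n|u₁) ≤ e^{−η}/|M₂|` is at most `e^{−η}`, hence
`Pr{Ŷ^n = Y^n} ≤ P_{Y^n φ(X^n)}(𝒜ᶜ) + e^{−η}` with
`𝒜 = {(y^n,u₁) : P_{Y^n|φ(X^n)}(y^n|u₁) ≤ e^{−η}/|M₂|}`. -/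
theorem stmt15 {X Y M₁ M₂ : Type*} [Fintype X] [Fintype Y] [Fintype M₁] [Fintype M₂]
    (n : ℕ) (PXY : X → Y → ℝ) (h0 : ∀ x y, 0 ≤ PXY x y) (h1 : ∑ x, ∑ y, PXY x y = 1)
    (φ : (Fin n → X) → M₁) (φ₂ : (Fin n → Y) → M₂) (ψ : M₁ → M₂ → (Fin n → Y))
    (η : ℝ) (hη : 0 < η) :
    (∑ m₁ : M₁, ∑ y : Fin n → Y,
        if ψ m₁ (φ₂ y) = y ∧
            (∑ x : Fin n → X, if φ x = m₁ then ∏ l, PXY (x l) (y l) else 0) /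
              (∑ y' : Fin n → Y, ∑ x : Fin n → X, if φ x = m₁ then ∏ l, PXY (x l) (y' l) else 0)
              ≤ Real.exp (-η) / Fintype.card M₂
        then ∑ x : Fin n → X, if φ x = m₁ then ∏ l, PXY (x l) (y l) else 0 else 0)
      ≤ Real.exp (-η) ∧
    (∑ x : Fin n → X, ∑ y : Fin n → Y,
        if ψ (φ x) (φ₂ y) = y then ∏ l, PXY (x l) (y l) else 0)
      ≤ (∑ m₁ : M₁, ∑ y : Fin n → Y,
          if ¬ ((∑ x : Fin n → X, if φ x = m₁ then ∏ l, PXY (x l) (y l) else 0) /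
              (∑ y' : Fin n → Y, ∑ x : Fin n → X, if φ x = m₁ then ∏ l, PXY (x l) (y' l) else 0)
              ≤ Real.exp (-η) / Fintype.card M₂)
          then ∑ x : Fin n → X, if φ x = m₁ then ∏ l, PXY (x l) (y l) else 0 else 0)
        + Real.exp (-η) :=
  stmt15_general n PXY h0 h1 φ φ₂ ψ η
end
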